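/- arXiv:2407.06742 — 3 statements merged into one kernel-verified Lean document; each statement's English description precedes it below -/
import Mathlib

section
/- Decomposition theorem: Let X be a set, f : X → ℝ, Y ⊆ X, and h₁, …, h_m : X → X a family of pairwise commuting moves such that for every pair i ≠ j and every composition H of a subset of the remaining moves {h_k : k ≠ i, k ≠ j} (including the empty composition, i.e. the identity), the moves h_i and h_j are non-interacting on the set H(Y) := {H(y) : y ∈ Y}. Then for all x ∈ Y, (Δ_{h_m ∘ ⋯ ∘ h₁} f)(x) = Σ_{i=1}^{m} (Δ_{h_i} f)(x). -/
/-- Composition of the moves indexed by a list: `compList h [k₁, k₂, …]` applies the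
moves from right to left, i.e. it equals `h k₁ ∘ h k₂ ∘ ⋯`. -/
def compList {X : Type*} {m : ℕ} (h : Fin m → X → X) : List (Fin m) → X → X
  | [], x => x
  | k :: L, x => h k (compList h L x)

theorem stmt_2 {X : Type*} {m : ℕ} (f : X → ℝ) (Y : Set X) (h : Fin m → X → X)
    (hcomm : ∀ i j, h i ∘ h j = h j ∘ h i)
    (hni : ∀ i j, i ≠ j → ∀ L : List (Fin m), (∀ k ∈ L, k ≠ i ∧ k ≠ j) →
      ∀ y ∈ Y, f (h j (h i (compList h L y))) - f (h i (compList h L y)) =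
        f (h j (compList h L y)) - f (compList h L y)) :
    ∀ x ∈ Y, f (compList h (List.finRange m) x) - f x =
      ∑ i : Fin m, (f (h i x) - f x) := by
  have aux : ∀ (k : Fin m) (L : List (Fin m)), L.Nodup → k ∉ L → ∀ x ∈ Y,
      f (h k (compList h L x)) - f (compList h L x) = f (h k x) - f x := by
    intro k L
    induction L with
    | nil => intro _ _ x _; simp [compList]
    | cons j L' ih =>
      intro hnd hk x hx
      have hjk : j ≠ k := fun e => (by simp [e] at hk)
      have hmem : ∀ a ∈ L', a ≠ j ∧ a ≠ k := by
        intro a ha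
        constructor
        · rintro rfl; exact (List.nodup_cons.mp hnd).1 ha
        · rintro rfl; exact hk (List.mem_cons_of_mem _ ha)
      have h1 := hni j k hjk L' hmem x hx
      simp only [compList]
      rw [h1]
      exact ih (List.nodup_cons.mp hnd).2 (fun e => hk (List.mem_cons_of_mem _ e)) x hx
  have main : ∀ (L : List (Fin m)), L.Nodup → ∀ x ∈ Y,
      f (compList h L x) - f x = (L.map (fun i => f (h i x) - f x)).sum := by
    intro L
    induction L with
    | nil => intro _ x _; simp [compList]
    | cons k L' ih =>
      intro hnd x hx
      have hnd' := List.nodup_cons.mp hnd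
      have := aux k L' hnd'.2 hnd'.1 x hx
      simp only [compList, List.map_cons, List.sum_cons]
      rw [← ih hnd'.2 x hx, ← this]
      ring
  intro x hx
  rw [Fin.sum_univ_def]
  exact main _ (List.nodup_finRange m) x hx
end

section
/- Lattice linear equation: Under the hypotheses of the decomposition theorem (pairwise commuting moves h₁, …, h_m that are pairwise non-interacting on all sets H(Y) for compositions H of the other moves), for every subset W ⊆ {1, …, m} and every x ∈ Y, (Δ_{H_W} f)(x) = Σ_{i ∈ W} (Δ_{h_i} f)(x), where H_W = ∘_{i ∈ W} h_i is the composition of the moves indexed by W. -/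
theorem stmt_3 {X : Type*} {m : ℕ} (f : X → ℝ) (Y : Set X) (h : Fin m → X → X)
    (hcomm : ∀ i j, h i ∘ h j = h j ∘ h i)
    (hni : ∀ i j, i ≠ j → ∀ L : List (Fin m), (∀ k ∈ L, k ≠ i ∧ k ≠ j) →
      ∀ y ∈ Y, f (h j (h i (compList h L y))) - f (h i (compList h L y)) =
        f (h j (compList h L y)) - f (compList h L y)) :
    ∀ W : List (Fin m), W.Nodup → ∀ x ∈ Y,
      f (compList h W x) - f x = (W.map (fun i => f (h i x) - f x)).sum := by
  have key : ∀ (i : Fin m) (L : List (Fin m)), L.Nodup → (∀ k ∈ L, k ≠ i) → ∀ x ∈ Y,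
      f (h i (compList h L x)) - f (compList h L x) = f (h i x) - f x := by
    intro i L
    induction L with
    | nil => intro _ _ x _; rfl
    | cons j L' ih =>
      intro hnd hne x hx
      have hji : j ≠ i := hne j (by simp)
      have hnd' : L'.Nodup := (List.nodup_cons.mp hnd).2
      have hjn : j ∉ L' := (List.nodup_cons.mp hnd).1
      have h1 := hni i j (Ne.symm hji) L'
        (fun k hk => ⟨hne k (by simp [hk]), fun hkj => hjn (hkj ▸ hk)⟩) x hx
      have h2 := ih hnd' (fun k hk => hne k (by simp [hk])) x hx
      have hc : h i (h j (compList h L' x)) = h j (h i (compList h L' x)) :=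
        congrFun (hcomm i j) (compList h L' x)
      simp only [compList] at *
      rw [hc]
      linarith
  intro W
  induction W with
  | nil => intro _ x _; simp [compList]
  | cons i L ih =>
    intro hnd x hx
    have hnd' : L.Nodup := (List.nodup_cons.mp hnd).2
    have hin : i ∉ L := (List.nodup_cons.mp hnd).1
    have hk := key i L hnd' (fun k hk hki => hin (hki ▸ hk)) x hx
    have h2 := ih hnd' x hx
    simp only [compList, List.map_cons, List.sum_cons]
    linarith
end

section
/- Walsh characterization of non-interaction in ℤ₂ⁿ: Let f : (ℤ₂)ⁿ → ℝ with Walsh transform f̂(λ) = Σ_{x ∈ (ℤ₂)ⁿ} f(x) φ_λ(x), where φ_λ(x) = ∏_{i=1}^n (−1)^{λ_i x_i}. Two moves h₁, h₂ ∈ (ℤ₂)ⁿ (acting by x ↦ x + h, XOR) are non-interacting for f if and only if for every λ with f̂(λ) ≠ 0, either φ_λ(h₁) = 1 or φ_λ(h₂) = 1. -/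
/-!
Translation by `h` multiplies the Walsh transform by the character value `φ_λ(h)`, so
the mixed difference `f(h₁ + h₂ + x) - f(h₁ + x) - f(h₂ + x) + f(x)` has transform
`(φ_λ(h₁) - 1)(φ_λ(h₂) - 1) f̂(λ)`. Non-interaction says this mixed difference vanishes, and by
Walsh inversion that happens exactly when every such product vanishes.
-/

/-- Walsh function `φ_λ(x) = ∏ i, (-1)^(λ_i x_i)` on `(ℤ₂)ⁿ`. -/
def walsh {n : ℕ} (lam x : Fin n → ZMod 2) : ℝ :=
  ∏ i : Fin n, (-1 : ℝ) ^ ((lam i).val * (x i).val)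

/-- Walsh (Fourier) transform of `f : (ℤ₂)ⁿ → ℝ`. -/
def walshTransform {n : ℕ} (f : (Fin n → ZMod 2) → ℝ) (lam : Fin n → ZMod 2) : ℝ :=
  ∑ x : Fin n → ZMod 2, f x * walsh lam x

open Finset

section Walsh

variable {n : ℕ}

lemma neg_one_pow_mul_mod_two (k m : ℕ) : (-1 : ℝ) ^ (k * (m % 2)) = (-1) ^ (k * m) := by
  rw [neg_one_pow_eq_pow_mod_two, Nat.mul_mod, Nat.mod_mod, ← Nat.mul_mod,
    ← neg_one_pow_eq_pow_mod_two]

lemma neg_one_pow_val_mul_add (a b c : ZMod 2) :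
    (-1 : ℝ) ^ (a.val * (b + c).val) = (-1) ^ (a.val * b.val) * (-1) ^ (a.val * c.val) := by
  rw [← pow_add, ← mul_add, ZMod.val_add, neg_one_pow_mul_mod_two]

lemma sum_neg_one_pow_val_mul (b : ZMod 2) :
    ∑ a : ZMod 2, (-1 : ℝ) ^ (a.val * b.val) = if b = 0 then 2 else 0 := by
  rw [show (univ : Finset (ZMod 2)) = {0, 1} by decide, sum_pair zero_ne_one]
  rcases (by decide : ∀ b : ZMod 2, b = 0 ∨ b = 1) b with rfl | rfl <;> norm_num [ZMod.val_one]

lemma walsh_add_right (lam x y : Fin n → ZMod 2) :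
    walsh lam (x + y) = walsh lam x * walsh lam y := by
  simp only [walsh, Pi.add_apply, neg_one_pow_val_mul_add, prod_mul_distrib]

lemma walsh_neg_right (lam x : Fin n → ZMod 2) : walsh lam (-x) = walsh lam x := by
  simp only [walsh, Pi.neg_apply, ZMod.neg_eq_self_mod_two]

lemma walsh_sub_right (lam x y : Fin n → ZMod 2) :
    walsh lam (x - y) = walsh lam x * walsh lam y := by
  rw [sub_eq_add_neg, walsh_add_right, walsh_neg_right]

lemma sum_walsh (z : Fin n → ZMod 2) :
    ∑ lam, walsh lam z = if z = 0 then 2 ^ n else 0 := by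
  calc ∑ lam, walsh lam z = ∏ i, ∑ a : ZMod 2, (-1 : ℝ) ^ (a.val * (z i).val) :=
        (Fintype.prod_sum fun i (a : ZMod 2) => (-1 : ℝ) ^ (a.val * (z i).val)).symm
    _ = if z = 0 then 2 ^ n else 0 := by
        simp only [sum_neg_one_pow_val_mul, Fintype.prod_ite_zero, funext_iff, Pi.zero_apply,
          prod_const, card_univ, Fintype.card_fin]

lemma walshTransform_comp_add_left (f : (Fin n → ZMod 2) → ℝ) (h lam : Fin n → ZMod 2) :
    walshTransform (fun x => f (h + x)) lam = walsh lam h * walshTransform f lam := by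
  rw [walshTransform, ← (Equiv.subRight h).sum_comp, walshTransform, mul_sum]
  refine sum_congr rfl fun y _ => ?_
  simp only [Equiv.subRight_apply, add_sub_cancel, walsh_sub_right]
  ring

lemma sum_walshTransform_mul_walsh (f : (Fin n → ZMod 2) → ℝ) (y : Fin n → ZMod 2) :
    ∑ lam, walshTransform f lam * walsh lam y = 2 ^ n * f y := by
  calc ∑ lam, walshTransform f lam * walsh lam y
      = ∑ x, f x * ∑ lam, walsh lam (x - y) := by
        simp only [walshTransform, sum_mul, mul_sum, walsh_sub_right, mul_assoc]
        exact sum_comm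
    _ = 2 ^ n * f y := by
        simp only [sum_walsh, sub_eq_zero, mul_ite, mul_zero, sum_ite_eq', mem_univ, if_true,
          mul_comm]

lemma walshTransform_eq_zero_iff (f : (Fin n → ZMod 2) → ℝ) :
    walshTransform f = 0 ↔ f = 0 := by
  refine ⟨fun hf => funext fun y => ?_,
    fun hf => funext fun lam => by simp [hf, walshTransform]⟩
  simpa [hf] using (sum_walshTransform_mul_walsh f y).symm

def mixedDiff (f : (Fin n → ZMod 2) → ℝ) (h₁ h₂ x : Fin n → ZMod 2) : ℝ :=
  f (h₁ + h₂ + x) - f (h₁ + x) - f (h₂ + x) + f x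

lemma walshTransform_mixedDiff (f : (Fin n → ZMod 2) → ℝ) (h₁ h₂ lam : Fin n → ZMod 2) :
    walshTransform (mixedDiff f h₁ h₂) lam
      = (walsh lam h₁ - 1) * (walsh lam h₂ - 1) * walshTransform f lam := by
  have hsplit : walshTransform (mixedDiff f h₁ h₂) lam
      = walshTransform (fun x => f (h₁ + h₂ + x)) lam
        - walshTransform (fun x => f (h₁ + x)) lam - walshTransform (fun x => f (h₂ + x)) lam
        + walshTransform f lam := by
    simp only [walshTransform, mixedDiff, sub_mul, add_mul, sum_add_distrib, sum_sub_distrib]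
  rw [hsplit, walshTransform_comp_add_left, walshTransform_comp_add_left,
    walshTransform_comp_add_left, walsh_add_right]
  ring

end Walsh

theorem stmt_10 {n : ℕ} (f : (Fin n → ZMod 2) → ℝ) (h₁ h₂ : Fin n → ZMod 2) :
    (∀ x : Fin n → ZMod 2,
      f (h₁ + h₂ + x) - f x = (f (h₁ + x) - f x) + (f (h₂ + x) - f x)) ↔
    (∀ lam : Fin n → ZMod 2, walshTransform f lam ≠ 0 →
      walsh lam h₁ = 1 ∨ walsh lam h₂ = 1) := by
  have hmixed : (∀ x : Fin n → ZMod 2,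
      f (h₁ + h₂ + x) - f x = (f (h₁ + x) - f x) + (f (h₂ + x) - f x)) ↔
      mixedDiff f h₁ h₂ = 0 := by
    simp only [funext_iff, mixedDiff, Pi.zero_apply]
    exact forall_congr' fun x => by constructor <;> intro h <;> linarith
  rw [hmixed, ← walshTransform_eq_zero_iff, funext_iff]
  refine forall_congr' fun lam => ?_
  rw [Pi.zero_apply, walshTransform_mixedDiff, mul_eq_zero, mul_eq_zero, sub_eq_zero, sub_eq_zero]
  tauto
end
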